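/- arXiv:1807.09633 — 2 statements merged into one kernel-verified Lean document; each statement's English description precedes it below -/
import Mathlib

section
/- If U ~ Beta(a,b) and V ~ Beta(a+b,c) are independent, then the product UV has distribution Beta(a, b+c). -/
open MeasureTheory ProbabilityTheory

/-- The density of the Beta(a,b) distribution on (0,1). -/
noncomputable def betaPDF (a b x : ℝ) : ENNReal :=
  if x ∈ Set.Ioo (0 : ℝ) 1 then
    ENNReal.ofReal (Real.Gamma (a + b) / (Real.Gamma a * Real.Gamma b)
      * x ^ (a - 1) * (1 - x) ^ (b - 1))
  else 0

/-- The Beta(a,b) distribution on ℝ. -/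
noncomputable def betaMeasure (a b : ℝ) : Measure ℝ :=
  MeasureTheory.volume.withDensity (_root_.betaPDF a b)

/-!
Independence makes the law of `UV` the multiplicative convolution of the two Beta laws, whose
density at `z ∈ (0,1)` is `∫ f_{a,b}(z/y) f_{a+b,c}(y) dy/y`. On `z < y < 1` all powers of `y`
cancel and the integrand becomes a multiple of `z^(a-1) (y-z)^(b-1) (1-y)^(c-1)`; an affine
substitution turns `∫_z^1 (y-z)^(b-1) (1-y)^(c-1) dy` into `(1-z)^(b+c-1) B(b,c)`, and
`B(a,b) B(a+b,c) = B(a,b+c) B(b,c)` identifies the constant.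
-/

open Set
open scoped ENNReal

theorem Real.lintegral_comp_mul_left {f : ℝ → ℝ≥0∞} (hf : Measurable f) {y : ℝ}
    (hy : y ≠ 0) : ∫⁻ x, f (y * x) = ENNReal.ofReal |y⁻¹| * ∫⁻ z, f z := by
  rw [← lintegral_map hf (measurable_const_mul y), Real.map_volume_mul_left hy,
    lintegral_smul_measure, smul_eq_mul]

theorem Real.withDensity_mconv_withDensity {f g : ℝ → ℝ≥0∞} (hf : Measurable f)
    (hg : Measurable g) :
    volume.withDensity f ∗ₘ volume.withDensity g
      = volume.withDensity (fun z => ∫⁻ y, f (z / y) * g y * ENNReal.ofReal |y⁻¹|) := by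
  refine Measure.ext_of_lintegral _ fun φ hφ => ?_
  have hsubst : ∀ᵐ y, g y * ∫⁻ x, f x * φ (y * x)
      = ∫⁻ z, f (z / y) * g y * ENNReal.ofReal |y⁻¹| * φ z := by
    filter_upwards [Measure.ae_ne volume 0] with y hy
    have := Real.lintegral_comp_mul_left (f := fun z => f (z / y) * φ z) (by fun_prop) hy
    simp only [mul_div_cancel_left₀ _ hy] at this
    rw [this, ← lintegral_const_mul' _ _ ENNReal.ofReal_ne_top,
      ← lintegral_const_mul'' _ (by fun_prop)]
    congr with z
    ring
  calc ∫⁻ z, φ z ∂(volume.withDensity f ∗ₘ volume.withDensity g)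
      = ∫⁻ y, ∫⁻ x, φ (y * x) ∂(volume.withDensity f) ∂(volume.withDensity g) := by
        rw [Measure.mconv_comm, Measure.lintegral_mconv hφ]
    _ = ∫⁻ y, g y * ∫⁻ x, f x * φ (y * x) := by
        rw [lintegral_withDensity_eq_lintegral_mul _ hg (by fun_prop)]
        congr with y
        exact congrArg (g y * ·) (lintegral_withDensity_eq_lintegral_mul _ hf (by fun_prop))
    _ = ∫⁻ y, ∫⁻ z, f (z / y) * g y * ENNReal.ofReal |y⁻¹| * φ z :=
        lintegral_congr_ae hsubst
    _ = ∫⁻ z, (∫⁻ y, f (z / y) * g y * ENNReal.ofReal |y⁻¹|) * φ z := by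
        rw [lintegral_lintegral_swap (by fun_prop)]
        congr with z
        rw [lintegral_mul_const _ (by fun_prop)]
    _ = _ := (lintegral_withDensity_eq_lintegral_mul _ (by fun_prop) hφ).symm

-- Inside this namespace `betaPDF` and `betaMeasure` are Mathlib's; they agree with the definitions
-- above by `betaPDF_eq_probabilityTheory_betaPDF`.
namespace ProbabilityTheory

lemma beta_mul_beta_add {a b c : ℝ} (ha : 0 < a) (hb : 0 < b) (hc : 0 < c) :
    beta a b * beta (a + b) c = beta a (b + c) * beta b c := by
  have hab := (Real.Gamma_pos_of_pos (add_pos ha hb)).ne'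
  have hbc := (Real.Gamma_pos_of_pos (add_pos hb hc)).ne'
  simp only [beta, ← add_assoc]
  field_simp

lemma lintegral_Ioo_rpow_mul_one_sub_rpow {p q : ℝ} (hp : 0 < p) (hq : 0 < q) :
    ∫⁻ t in Ioo 0 1, ENNReal.ofReal (t ^ (p - 1) * (1 - t) ^ (q - 1))
      = ENNReal.ofReal (beta p q) := by
  have hB := beta_pos hp hq
  have h := lintegral_betaPDF_eq_one hp hq
  simp_rw [lintegral_betaPDF, mul_assoc, ENNReal.ofReal_mul (one_div_pos.2 hB).le] at h
  rw [lintegral_const_mul' _ _ ENNReal.ofReal_ne_top, mul_comm] at h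
  rw [ENNReal.eq_inv_of_mul_eq_one_left h, ← ENNReal.ofReal_inv_of_pos (by positivity), one_div,
    inv_inv]

lemma lintegral_Ioo_sub_rpow_mul_sub_rpow {p q u v : ℝ} (hp : 0 < p) (hq : 0 < q) (huv : u < v) :
    ∫⁻ y in Ioo u v, ENNReal.ofReal ((y - u) ^ (p - 1) * (v - y) ^ (q - 1))
      = ENNReal.ofReal ((v - u) ^ (p + q - 1) * beta p q) := by
  have hvu : 0 < v - u := sub_pos.2 huv
  have himage : (fun t => (v - u) * t + u) '' Ioo 0 1 = Ioo u v := by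
    simp [image_affine_Ioo hvu]
  have hderiv : ∀ t ∈ Ioo (0 : ℝ) 1,
      HasDerivWithinAt (fun t => (v - u) * t + u) (v - u) (Ioo 0 1) t := fun t _ =>
    (((hasDerivAt_id t).const_mul (v - u)).add_const u).hasDerivWithinAt.congr_deriv (mul_one _)
  have hintegrand : ∀ t ∈ Ioo (0 : ℝ) 1,
      ENNReal.ofReal |v - u| * ENNReal.ofReal
          (((v - u) * t + u - u) ^ (p - 1) * (v - ((v - u) * t + u)) ^ (q - 1))
        = ENNReal.ofReal ((v - u) ^ (p + q - 1))
          * ENNReal.ofReal (t ^ (p - 1) * (1 - t) ^ (q - 1)) := by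
    rintro t ⟨ht0, ht1⟩
    rw [abs_of_pos hvu, ← ENNReal.ofReal_mul hvu.le, ← ENNReal.ofReal_mul (by positivity)]
    congr 1
    rw [add_sub_cancel_right, show v - ((v - u) * t + u) = (v - u) * (1 - t) by ring,
      Real.mul_rpow hvu.le ht0.le, Real.mul_rpow hvu.le (by linarith),
      show p + q - 1 = (p - 1) + (q - 1) + 1 by ring, Real.rpow_add hvu, Real.rpow_add hvu,
      Real.rpow_one]
    ring
  rw [← himage, lintegral_image_eq_lintegral_abs_deriv_mul measurableSet_Ioo hderiv
      ((add_left_injective u).comp (mul_right_injective₀ hvu.ne')).injOn,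
    setLIntegral_congr_fun measurableSet_Ioo hintegrand,
    lintegral_const_mul' _ _ ENNReal.ofReal_ne_top,
    lintegral_Ioo_rpow_mul_one_sub_rpow hp hq, ← ENNReal.ofReal_mul (by positivity)]

lemma measurable_betaPDF (a b : ℝ) : Measurable (betaPDF a b) :=
  (measurable_betaPDFReal a b).ennreal_ofReal

lemma betaPDF_div_mul_betaPDF_mul_abs_inv {a b c z : ℝ} (ha : 0 < a) (hb : 0 < b) (hc : 0 < c)
    (hz : 0 < z) (y : ℝ) :
    betaPDF a b (z / y) * betaPDF (a + b) c y * ENNReal.ofReal |y⁻¹|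
      = (Ioo z 1).indicator (fun y => ENNReal.ofReal
          (z ^ (a - 1) / (beta a b * beta (a + b) c) * ((y - z) ^ (b - 1) * (1 - y) ^ (c - 1))))
        y := by
  by_cases hy : y ∈ Ioo z 1
  · rw [indicator_of_mem hy]
    obtain ⟨hzy, hy1⟩ := hy
    have hy0 : 0 < y := hz.trans hzy
    have hzy1 : z / y < 1 := (div_lt_one hy0).2 hzy
    have hB₁ := beta_pos ha hb
    have hB₂ := beta_pos (add_pos ha hb) hc
    rw [betaPDF_of_pos_lt_one (div_pos hz hy0) hzy1,
      betaPDF_of_pos_lt_one hy0 hy1, abs_of_pos (inv_pos.2 hy0),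
      ← ENNReal.ofReal_mul (by positivity), ← ENNReal.ofReal_mul (by positivity)]
    congr 1
    rw [one_sub_div hy0.ne', Real.div_rpow hz.le hy0.le, Real.div_rpow (by linarith) hy0.le,
      show a + b - 1 = (a - 1) + (b - 1) + 1 by ring, Real.rpow_add hy0, Real.rpow_add hy0,
      Real.rpow_one]
    have hya := Real.rpow_pos_of_pos hy0 (a - 1)
    have hyb := Real.rpow_pos_of_pos hy0 (b - 1)
    field_simp
  · rw [indicator_of_notMem hy]
    rcases le_or_gt y 0 with hy0 | hy0
    · rw [betaPDF_eq_zero_of_nonpos hy0, mul_zero, zero_mul]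
    rcases le_or_gt 1 y with hy1 | hy1
    · rw [betaPDF_eq_zero_of_one_le hy1, mul_zero, zero_mul]
    · have hyz : y ≤ z := not_lt.1 fun h => hy ⟨h, hy1⟩
      rw [betaPDF_eq_zero_of_one_le ((one_le_div hy0).2 hyz), zero_mul, zero_mul]

lemma lintegral_betaPDF_div_mul_betaPDF_mul_abs_inv {a b c : ℝ} (ha : 0 < a) (hb : 0 < b)
    (hc : 0 < c) (z : ℝ) :
    ∫⁻ y, betaPDF a b (z / y) * betaPDF (a + b) c y * ENNReal.ofReal |y⁻¹|
      = betaPDF a (b + c) z := by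
  rcases le_or_gt z 0 with hz0 | hz0
  · rw [betaPDF_eq_zero_of_nonpos hz0, ← lintegral_zero]
    congr with y
    rcases le_or_gt y 0 with hy0 | hy0
    · rw [betaPDF_eq_zero_of_nonpos hy0, mul_zero, zero_mul]
    · rw [betaPDF_eq_zero_of_nonpos (div_nonpos_of_nonpos_of_nonneg hz0 hy0.le), zero_mul,
        zero_mul]
  simp_rw [betaPDF_div_mul_betaPDF_mul_abs_inv ha hb hc hz0]
  rcases le_or_gt 1 z with hz1 | hz1
  · rw [Ioo_eq_empty (not_lt.2 hz1), indicator_empty, lintegral_zero,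
      betaPDF_eq_zero_of_one_le hz1]
  have hB₁ := beta_pos ha hb
  have hB₂ := beta_pos (add_pos ha hb) hc
  simp_rw [ENNReal.ofReal_mul (by positivity : 0 ≤ z ^ (a - 1) / (beta a b * beta (a + b) c))]
  rw [lintegral_indicator measurableSet_Ioo, lintegral_const_mul' _ _ ENNReal.ofReal_ne_top,
    lintegral_Ioo_sub_rpow_mul_sub_rpow hb hc hz1, ← ENNReal.ofReal_mul (by positivity),
    betaPDF_of_pos_lt_one hz0 hz1]
  congr 1
  have hB₃ := beta_pos hb hc
  have hB₄ := beta_pos ha (add_pos hb hc)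
  field_simp
  rw [beta_mul_beta_add ha hb hc, mul_comm]

theorem betaMeasure_mconv_betaMeasure {a b c : ℝ} (ha : 0 < a) (hb : 0 < b) (hc : 0 < c) :
    betaMeasure a b ∗ₘ betaMeasure (a + b) c = betaMeasure a (b + c) := by
  rw [betaMeasure, betaMeasure,
    Real.withDensity_mconv_withDensity (measurable_betaPDF a b) (measurable_betaPDF (a + b) c)]
  simp_rw [lintegral_betaPDF_div_mul_betaPDF_mul_abs_inv ha hb hc]
  rfl

end ProbabilityTheory

theorem betaPDF_eq_probabilityTheory_betaPDF (a b : ℝ) :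
    _root_.betaPDF a b = ProbabilityTheory.betaPDF a b := by
  funext x
  rw [_root_.betaPDF, ProbabilityTheory.betaPDF_eq, beta, one_div_div,
    apply_ite ENNReal.ofReal, ENNReal.ofReal_zero]
  exact if_congr mem_Ioo rfl rfl

/-- If `U ~ Beta(a,b)` and `V ~ Beta(a+b,c)` are independent, then `UV ~ Beta(a, b+c)`. -/
theorem beta_mul_beta {Ω : Type*} [MeasurableSpace Ω] (P : Measure Ω) [IsProbabilityMeasure P]
    (a b c : ℝ) (ha : 0 < a) (hb : 0 < b) (hc : 0 < c)
    (U V : Ω → ℝ) (hU : Measurable U) (hV : Measurable V)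
    (hindep : IndepFun U V P)
    (hU_dist : P.map U = _root_.betaMeasure a b) (hV_dist : P.map V = _root_.betaMeasure (a + b) c) :
    P.map (fun ω => U ω * V ω) = _root_.betaMeasure a (b + c) := by
  rw [show (fun ω => U ω * V ω) = U * V from rfl, hindep.map_mul_eq_map_mconv_map hU hV, hU_dist,
    hV_dist]
  simp only [_root_.betaMeasure, betaPDF_eq_probabilityTheory_betaPDF]
  exact betaMeasure_mconv_betaMeasure ha hb hc
end

section
/- Let a, δ > 0, k ≥ 2 an integer, and let U_1,…,U_k be independent random variables with U_j ~ Beta(a + (j-1)δ, δ). Then the product U_1 ⋯ U_k has distribution Beta(a, kδ). -/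
open MeasureTheory ProbabilityTheory

/-!
Method of moments. The `n`-th moment of `Beta(p, q)` is `B(p + n, q) / B(p, q) = r p / r (p + q)`
with `r p = Γ(p + n) / Γ(p)`. By independence the moments of `U_1 ⋯ U_k` multiply, and since the
`j`-th factor has `p = a + (j-1)δ` and `p + q = a + jδ`, their product telescopes to
`r a / r (a + kδ)`, the `n`-th moment of `Beta(a, kδ)`. Both laws live on `[0, 1]`, where a finite
measure is determined by its moments (Weierstrass approximation).
-/

open Set Polynomial

lemma Finset.prod_range_div_succ_of_ne_zero {K : Type*} [Field K] (f : ℕ → K)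
    (hf : ∀ i, f i ≠ 0) (n : ℕ) : ∏ i ∈ Finset.range n, f i / f (i + 1) = f 0 / f n := by
  simpa [Units.val_div_eq_div_val] using
    congrArg Units.val (Finset.prod_range_div' (fun i => Units.mk0 (f i) (hf i)) n)

namespace MeasureTheory.Measure

variable {μ ν : Measure ℝ} {a b : ℝ}

lemma integrable_of_ae_mem_of_isCompact [IsFiniteMeasure μ] {K : Set ℝ} (hK : IsCompact K)
    (hμ : ∀ᵐ x ∂μ, x ∈ K) {g : ℝ → ℝ} (hg : Continuous g) : Integrable g μ := by
  have := hg.continuousOn.integrableOn_compact (μ := μ) hK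
  rwa [IntegrableOn, restrict_eq_self_of_ae_mem hμ] at this

lemma dist_integral_le_of_ae_mem_of_isCompact [IsFiniteMeasure μ] {K : Set ℝ} (hK : IsCompact K)
    (hμ : ∀ᵐ x ∂μ, x ∈ K) {g h : ℝ → ℝ} (hg : Continuous g) (hh : Continuous h) {η : ℝ}
    (hgh : ∀ x ∈ K, |g x - h x| ≤ η) :
    dist (∫ x, g x ∂μ) (∫ x, h x ∂μ) ≤ η * μ.real univ := by
  rw [dist_eq_norm, ← integral_sub (integrable_of_ae_mem_of_isCompact hK hμ hg)
    (integrable_of_ae_mem_of_isCompact hK hμ hh)]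
  refine norm_integral_le_of_norm_le_const ?_
  filter_upwards [hμ] with x hx using hgh x hx

lemma integral_eval_eq_of_integral_pow_eq [IsFiniteMeasure μ] [IsFiniteMeasure ν] {K : Set ℝ}
    (hK : IsCompact K) (hμ : ∀ᵐ x ∂μ, x ∈ K) (hν : ∀ᵐ x ∂ν, x ∈ K)
    (h : ∀ n : ℕ, ∫ x, x ^ n ∂μ = ∫ x, x ^ n ∂ν) (p : ℝ[X]) :
    ∫ x, p.eval x ∂μ = ∫ x, p.eval x ∂ν := by
  induction p using Polynomial.induction_on' with
  | add p q hp hq =>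
    have hμint (r : ℝ[X]) := integrable_of_ae_mem_of_isCompact hK hμ r.continuous
    have hνint (r : ℝ[X]) := integrable_of_ae_mem_of_isCompact hK hν r.continuous
    simp only [eval_add]
    rw [integral_add (hμint p) (hμint q), integral_add (hνint p) (hνint q), hp, hq]
  | monomial n c => simp [integral_const_mul, h n]

theorem ext_of_integral_pow_eq_of_ae_mem_Icc [IsFiniteMeasure μ] [IsFiniteMeasure ν]
    (hμ : ∀ᵐ x ∂μ, x ∈ Icc a b) (hν : ∀ᵐ x ∂ν, x ∈ Icc a b)
    (h : ∀ n : ℕ, ∫ x, x ^ n ∂μ = ∫ x, x ^ n ∂ν) : μ = ν := by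
  refine ext_of_forall_integral_eq_of_IsFiniteMeasure fun f => eq_of_forall_dist_le fun ε hε => ?_
  set C := μ.real univ + ν.real univ
  set η := ε / (C + 1)
  obtain ⟨p, hp⟩ := exists_polynomial_near_of_continuousOn a b f f.continuous.continuousOn η
    (by positivity)
  have hpf : ∀ x ∈ Icc a b, |p.eval x - f x| ≤ η := fun x hx => (hp x hx).le
  have hfp : ∀ x ∈ Icc a b, |f x - p.eval x| ≤ η := fun x hx =>
    (abs_sub_comm _ _).trans_le (hpf x hx)
  calc dist (∫ x, f x ∂μ) (∫ x, f x ∂ν)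
      ≤ dist (∫ x, f x ∂μ) (∫ x, p.eval x ∂μ) + dist (∫ x, p.eval x ∂ν) (∫ x, f x ∂ν) := by
        rw [integral_eval_eq_of_integral_pow_eq isCompact_Icc hμ hν h p]
        exact dist_triangle _ _ _
    _ ≤ η * μ.real univ + η * ν.real univ := add_le_add
        (dist_integral_le_of_ae_mem_of_isCompact isCompact_Icc hμ f.continuous p.continuous hfp)
        (dist_integral_le_of_ae_mem_of_isCompact isCompact_Icc hν p.continuous f.continuous hpf)
    _ = ε * (C / (C + 1)) := by ring
    _ ≤ ε := mul_le_of_le_one_right hε.le ((div_le_one (by positivity)).mpr (by linarith))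

end MeasureTheory.Measure

namespace ProbabilityTheory

lemma integral_pow_map_prod_of_iIndepFun {Ω ι : Type*} [MeasurableSpace Ω] [Fintype ι]
    {P : Measure Ω} {U : ι → Ω → ℝ} (hU : ∀ i, Measurable (U i)) (hindep : iIndepFun U P)
    (n : ℕ) : ∫ x, x ^ n ∂P.map (fun ω => ∏ i, U i ω) = ∏ i, ∫ x, x ^ n ∂P.map (U i) := by
  rw [integral_map (by fun_prop) (by fun_prop)]
  simp_rw [← Finset.prod_pow]
  rw [hindep.integral_fun_prod_comp (f := fun _ (x : ℝ) => x ^ n)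
    (fun i => (hU i).aemeasurable) (fun _ => (continuous_pow n).aestronglyMeasurable)]
  exact Finset.prod_congr rfl fun i _ => (integral_map (hU i).aemeasurable
    (continuous_pow n).aestronglyMeasurable).symm

lemma betaPDFReal_nonneg {α β : ℝ} (hα : 0 < α) (hβ : 0 < β) (x : ℝ) :
    0 ≤ betaPDFReal α β x := by
  by_cases hx : 0 < x ∧ x < 1
  · exact (betaPDFReal_pos hx.1 hx.2 hα hβ).le
  · simp [betaPDFReal, hx]

lemma integral_betaPDFReal {α β : ℝ} (hα : 0 < α) (hβ : 0 < β) :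
    ∫ x, betaPDFReal α β x = 1 := by
  rw [integral_eq_lintegral_of_nonneg_ae (ae_of_all _ (betaPDFReal_nonneg hα hβ))
    (stronglyMeasurable_betaPDFReal α β).aestronglyMeasurable]
  change (∫⁻ x, betaPDF α β x).toReal = 1
  simp [lintegral_betaPDF_eq_one hα hβ]

lemma integral_betaMeasure {α β : ℝ} (hα : 0 < α) (hβ : 0 < β) (g : ℝ → ℝ) :
    ∫ x, g x ∂ProbabilityTheory.betaMeasure α β = ∫ x, betaPDFReal α β x * g x := by
  have hmeas : Measurable (betaPDF α β) := (measurable_betaPDFReal α β).ennreal_ofReal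
  rw [ProbabilityTheory.betaMeasure, integral_withDensity_eq_integral_toReal_smul hmeas
    (ae_of_all _ fun _ => ENNReal.ofReal_lt_top)]
  simp_rw [ProbabilityTheory.betaPDF, ENNReal.toReal_ofReal (betaPDFReal_nonneg hα hβ _),
    smul_eq_mul]

lemma pow_mul_betaPDFReal {α β : ℝ} (hα : 0 < α) (hβ : 0 < β) (n : ℕ) (x : ℝ) :
    x ^ n * betaPDFReal α β x = beta (α + n) β / beta α β * betaPDFReal (α + n) β x := by
  unfold betaPDFReal
  split_ifs with hx
  · have := (beta_pos (α := α + n) (by positivity) hβ).ne'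
    rw [← Real.rpow_natCast, show α + n - 1 = (α - 1) + n by ring, Real.rpow_add hx.1]
    field_simp
  · simp

lemma integral_pow_betaMeasure {α β : ℝ} (hα : 0 < α) (hβ : 0 < β) (n : ℕ) :
    ∫ x, x ^ n ∂ProbabilityTheory.betaMeasure α β = beta (α + n) β / beta α β := by
  rw [integral_betaMeasure hα hβ]
  simp_rw [mul_comm (betaPDFReal α β _), pow_mul_betaPDFReal hα hβ]
  rw [integral_const_mul, integral_betaPDFReal (by positivity) hβ, mul_one]

lemma ae_mem_Ioo_betaMeasure (α β : ℝ) :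
    ∀ᵐ x ∂ProbabilityTheory.betaMeasure α β, x ∈ Ioo 0 1 := by
  have hmeas : Measurable (betaPDF α β) := (measurable_betaPDFReal α β).ennreal_ofReal
  rw [ProbabilityTheory.betaMeasure, ae_withDensity_iff' hmeas.aemeasurable]
  refine ae_of_all _ fun x hx => by_contra fun hx' => hx ?_
  have : ¬(0 < x ∧ x < 1) := hx'
  rw [ProbabilityTheory.betaPDF, betaPDFReal, if_neg this, ENNReal.ofReal_zero]

lemma beta_add_nat_div_beta {p q : ℝ} (hp : 0 < p) (hq : 0 < q) (n : ℕ) :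
    beta (p + n) q / beta p q
      = Real.Gamma (p + n) / Real.Gamma p / (Real.Gamma (p + q + n) / Real.Gamma (p + q)) := by
  have := (Real.Gamma_pos_of_pos hp).ne'
  have := (Real.Gamma_pos_of_pos hq).ne'
  have := (Real.Gamma_pos_of_pos (add_pos hp hq)).ne'
  have := (Real.Gamma_pos_of_pos (by positivity : 0 < p + n)).ne'
  have := (Real.Gamma_pos_of_pos (by positivity : 0 < p + q + n)).ne'
  rw [beta, beta, add_right_comm p]
  field_simp

lemma prod_range_beta_add_nat_div_beta {a δ : ℝ} (ha : 0 < a) (hδ : 0 < δ) (n : ℕ) {k : ℕ}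
    (hk : 0 < k) :
    ∏ j ∈ Finset.range k, beta (a + j * δ + n) δ / beta (a + j * δ) δ
      = beta (a + n) (k * δ) / beta a (k * δ) := by
  set r : ℕ → ℝ := fun j => Real.Gamma (a + j * δ + n) / Real.Gamma (a + j * δ)
  have hr : ∀ j, r j ≠ 0 := fun j =>
    (div_pos (Real.Gamma_pos_of_pos (by positivity)) (Real.Gamma_pos_of_pos (by positivity))).ne'
  calc ∏ j ∈ Finset.range k, beta (a + j * δ + n) δ / beta (a + j * δ) δ
      = ∏ j ∈ Finset.range k, r j / r (j + 1) := by
        refine Finset.prod_congr rfl fun j _ => ?_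
        rw [beta_add_nat_div_beta (by positivity) hδ]
        simp only [r]
        push_cast
        ring_nf
    _ = r 0 / r k := Finset.prod_range_div_succ_of_ne_zero r hr k
    _ = _ := by
        rw [beta_add_nat_div_beta ha (by positivity)]
        simp [r]

end ProbabilityTheory

lemma betaMeasure_eq_probabilityTheory_betaMeasure (a b : ℝ) :
    _root_.betaMeasure a b = ProbabilityTheory.betaMeasure a b := by
  rw [_root_.betaMeasure, ProbabilityTheory.betaMeasure]
  congr 1
  funext x
  simp only [_root_.betaPDF, ProbabilityTheory.betaPDF, betaPDFReal, beta, one_div_div, mem_Ioo]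
  split_ifs <;> simp

/-- If `U_1, …, U_k` (`k ≥ 2`) are independent with `U_j ~ Beta(a + (j-1)δ, δ)`, then
`U_1 ⋯ U_k ~ Beta(a, kδ)`. -/
theorem beta_prod {Ω : Type*} [MeasurableSpace Ω] (P : Measure Ω) [IsProbabilityMeasure P]
    (a δ : ℝ) (ha : 0 < a) (hδ : 0 < δ) (k : ℕ) (hk : 2 ≤ k)
    (U : Fin k → Ω → ℝ) (hUmeas : ∀ j, Measurable (U j))
    (hindep : iIndepFun U P)
    (hdist : ∀ j : Fin k, P.map (U j) = _root_.betaMeasure (a + (j : ℝ) * δ) δ) :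
    P.map (fun ω => ∏ j, U j ω) = _root_.betaMeasure a (k * δ) := by
  simp only [betaMeasure_eq_probabilityTheory_betaMeasure] at hdist ⊢
  have hkδ : 0 < (k : ℝ) * δ := mul_pos (by exact_mod_cast (by omega : 0 < k)) hδ
  have := isProbabilityMeasureBeta ha hkδ
  have hU01 : ∀ᵐ ω ∂P, ∀ j, U j ω ∈ Ioo (0 : ℝ) 1 := ae_all_iff.mpr fun j =>
    ae_of_ae_map (hUmeas j).aemeasurable (hdist j ▸ ae_mem_Ioo_betaMeasure _ _)
  refine Measure.ext_of_integral_pow_eq_of_ae_mem_Icc (a := 0) (b := 1) ?_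
    ((ae_mem_Ioo_betaMeasure _ _).mono fun _ hx => Ioo_subset_Icc_self hx) fun n => ?_
  · refine (ae_map_iff (by fun_prop) measurableSet_Icc).mpr ?_
    filter_upwards [hU01] with ω hω
    exact ⟨Finset.prod_nonneg fun j _ => (hω j).1.le,
      Finset.prod_le_one (fun j _ => (hω j).1.le) fun j _ => (hω j).2.le⟩
  have hmoment (j : Fin k) : ∫ x, x ^ n ∂P.map (U j)
      = beta (a + (j : ℕ) * δ + n) δ / beta (a + (j : ℕ) * δ) δ := by
    rw [hdist j, integral_pow_betaMeasure (by positivity) hδ]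
  rw [integral_pow_map_prod_of_iIndepFun hUmeas hindep, integral_pow_betaMeasure ha hkδ,
    Finset.prod_congr rfl fun j _ => hmoment j,
    Fin.prod_univ_eq_prod_range (fun j : ℕ => beta (a + j * δ + n) δ / beta (a + j * δ) δ),
    prod_range_beta_add_nat_div_beta ha hδ n (by omega)]
end
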